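/- Let α ∈ [0, π/2) and let A be an n×n strictly accretive matrix whose numerical range lies in the sector S_α. Then the block matrix [[A, cos(α)·I],[cos(α)·I, A⁻¹]] is accretive. -/

import Mathlib

open MeasureTheory Matrix
open scoped ComplexOrder

/-- The "real part" (Hermitian part) of a complex matrix: `(A + Aᴴ)/2`. -/
noncomputable def mre {m : Type*} (A : Matrix m m ℂ) : Matrix m m ℂ :=
  (1/2 : ℂ) • (A + Aᴴ)

/-- A matrix is accretive if its Hermitian part is positive semidefinite. -/
def Accretive {m : Type*} [Fintype m] (A : Matrix m m ℂ) : Prop :=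
  (mre A).PosSemidef

/-- Principal fractional power `A ^ t` of a matrix whose spectrum avoids `(-∞, 0]`,
given (for `0 < t < 1`) by the standard integral formula
`A^t = (sin (tπ)/π) ∫₀^∞ s^(t-1) A (A + s I)⁻¹ ds`. -/
noncomputable def apow {m : Type*} [Fintype m] [DecidableEq m]
    (A : Matrix m m ℂ) (t : ℝ) : Matrix m m ℂ :=
  if t = 0 then 1 else if t = 1 then A else
    Matrix.of fun i j => ∫ s in Set.Ioi (0 : ℝ),
      (((Real.sin (t * Real.pi) / Real.pi) * s ^ (t - 1)) •
        (A * (A + (s : ℂ) • (1 : Matrix m m ℂ))⁻¹)) i j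

/-- The weighted geometric mean `A ♯ₜ B = A^(1/2) (A^(-1/2) B A^(-1/2))^t A^(1/2)`
of (strictly accretive) matrices. -/
noncomputable def gmean {m : Type*} [Fintype m] [DecidableEq m]
    (A : Matrix m m ℂ) (t : ℝ) (B : Matrix m m ℂ) : Matrix m m ℂ :=
  apow A (1/2) * apow ((apow A (1/2))⁻¹ * B * (apow A (1/2))⁻¹) t * apow A (1/2)

/-- `Matrix.PosSemidef.sqrt` as defined in the older Mathlib (removed since). -/
noncomputable def Matrix.PosSemidef.sqrt {n : Type*} [Fintype n] [DecidableEq n] {𝕜 : Type*}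
    [RCLike 𝕜] {A : Matrix n n 𝕜} (hA : A.PosSemidef) : Matrix n n 𝕜 :=
  hA.1.eigenvectorUnitary.1 * diagonal ((↑) ∘ (√·) ∘ hA.1.eigenvalues) *
  (star hA.1.eigenvectorUnitary : Matrix n n 𝕜)

/-- The absolute value `|X| = (Xᴴ X)^(1/2)` of a matrix. -/
noncomputable def absM {m : Type*} [Fintype m] [DecidableEq m]
    (X : Matrix m m ℂ) : Matrix m m ℂ :=
  (Matrix.posSemidef_conjTranspose_mul_self X).sqrt

/-- The `j`-th largest singular value of a complex matrix. -/
noncomputable def singVals {k : ℕ} (T : Matrix (Fin k) (Fin k) ℂ) (j : Fin k) : ℝ :=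
  Real.sqrt (((Matrix.posSemidef_conjTranspose_mul_self T).1.eigenvalues ∘
    Tuple.sort (Matrix.posSemidef_conjTranspose_mul_self T).1.eigenvalues) j.rev)

/-- The `j`-th largest eigenvalue of a Hermitian matrix (junk value `0` otherwise). -/
noncomputable def eigDesc {k : ℕ} (T : Matrix (Fin k) (Fin k) ℂ) (j : Fin k) : ℝ :=
  if h : T.IsHermitian then (h.eigenvalues ∘ Tuple.sort h.eigenvalues) j.rev else 0

/-- The numerical range of `A` lies in the sector
`S_α = {z : Re z ≥ 0, |Im z| ≤ tan α · Re z}`. -/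
def InSector {k : ℕ} (α : ℝ) (A : Matrix (Fin k) (Fin k) ℂ) : Prop :=
  ∀ x : EuclideanSpace ℂ (Fin k), ‖x‖ = 1 →
    0 ≤ (star (x : Fin k → ℂ) ⬝ᵥ A.mulVec (x : Fin k → ℂ)).re ∧
      |(star (x : Fin k → ℂ) ⬝ᵥ A.mulVec (x : Fin k → ℂ)).im| ≤
        Real.tan α * (star (x : Fin k → ℂ) ⬝ᵥ A.mulVec (x : Fin k → ℂ)).re

/-!
Write `A = H + i K` with `H = mre A` positive definite and `K = mim A` Hermitian, and let
`‖x‖_H² = re (xᴴ H x) = re (xᴴ A x)`. The sector condition says `|xᴴ K x| ≤ tan α · ‖x‖_H²`,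
which upgrades to the Cauchy–Schwarz type bound `|xᴴ K y| ≤ tan α ‖x‖_H ‖y‖_H` because
`tan α • H ± K` are positive semidefinite. Now `A y = H (y + i w)` with `H w = K y`; the cross term
`yᴴ H w = yᴴ K y` is real, so `‖y + i w‖_H² = ‖y‖_H² + ‖w‖_H²`, and `‖w‖_H ≤ tan α ‖y‖_H`.
Hence `cos α |uᴴ A y| ≤ ‖u‖_H ‖y‖_H`, and the Hermitian part of the block matrix evaluated at
`(u, A y)` is `‖u‖_H² + ‖y‖_H² + 2 cos α re (uᴴ A y) ≥ (‖u‖_H - ‖y‖_H)² ≥ 0`.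
-/

lemma Real.sqrt_mul_sqrt_add_sqrt_mul_sqrt_le {a b c d : ℝ} (ha : 0 ≤ a) (hb : 0 ≤ b)
    (hc : 0 ≤ c) (hd : 0 ≤ d) : √a * √b + √c * √d ≤ √(a + c) * √(b + d) := by
  simpa [Fin.sum_univ_two] using Real.sum_sqrt_mul_sqrt_le Finset.univ (f := ![a, c])
    (g := ![b, d]) (fun i => by fin_cases i <;> assumption) (fun i => by fin_cases i <;> assumption)

lemma Real.le_sq_mul_of_le_mul_sqrt_mul_sqrt {a b t : ℝ} (ha : 0 ≤ a) (hb : 0 ≤ b)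
    (h : a ≤ t * (√a * √b)) : a ≤ t ^ 2 * b := by
  rcases (Real.sqrt_nonneg a).eq_or_lt with h0 | hpos
  · rw [(Real.sqrt_eq_zero ha).1 h0.symm]
    positivity
  have hsqrt : √a ≤ t * √b :=
    le_of_mul_le_mul_left (by linarith [Real.mul_self_sqrt ha]) hpos
  calc a = √a ^ 2 := (Real.sq_sqrt ha).symm
    _ ≤ (t * √b) ^ 2 := by gcongr
    _ = t ^ 2 * b := by rw [mul_pow, Real.sq_sqrt hb]

section Hermitian

variable {m : Type*} [Fintype m] {𝕜 : Type*} [RCLike 𝕜]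

lemma Matrix.IsHermitian.posSemidef_of_re_dotProduct_mulVec_nonneg {M : Matrix m m 𝕜}
    (hM : M.IsHermitian) (h : ∀ x, 0 ≤ RCLike.re (star x ⬝ᵥ M *ᵥ x)) : M.PosSemidef :=
  .of_dotProduct_mulVec_nonneg hM fun x =>
    RCLike.nonneg_iff.2 ⟨h x, hM.im_star_dotProduct_mulVec_self x⟩

lemma Matrix.PosSemidef.norm_dotProduct_mulVec_le {M : Matrix m m 𝕜} (hM : M.PosSemidef)
    (x y : m → 𝕜) :
    ‖star x ⬝ᵥ M *ᵥ y‖ ≤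
      √(RCLike.re (star x ⬝ᵥ M *ᵥ x)) * √(RCLike.re (star y ⬝ᵥ M *ᵥ y)) := by
  let := M.toSeminormedAddCommGroup hM
  let := M.toInnerProductSpace hM
  have h : ‖(M *ᵥ y) ⬝ᵥ star x‖ ≤
      √(RCLike.re ((M *ᵥ x) ⬝ᵥ star x)) * √(RCLike.re ((M *ᵥ y) ⬝ᵥ star y)) :=
    norm_inner_le_norm (𝕜 := 𝕜) x y
  simpa only [dotProduct_comm _ (star _)] using h

lemma norm_dotProduct_mulVec_le_of_abs_re_le {H K : Matrix m m 𝕜} (hH : H.IsHermitian)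
    (hK : K.IsHermitian) {t : ℝ} (ht : 0 ≤ t)
    (hKH : ∀ x, |RCLike.re (star x ⬝ᵥ K *ᵥ x)| ≤ t * RCLike.re (star x ⬝ᵥ H *ᵥ x)) (x y : m → 𝕜) :
    ‖star x ⬝ᵥ K *ᵥ y‖ ≤
      t * (√(RCLike.re (star x ⬝ᵥ H *ᵥ x)) * √(RCLike.re (star y ⬝ᵥ H *ᵥ y))) := by
  have hadd : (t • H + K).PosSemidef :=
    ((hH.smul (IsSelfAdjoint.all t)).add hK).posSemidef_of_re_dotProduct_mulVec_nonneg fun z => by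
      simp only [add_mulVec, smul_mulVec, dotProduct_add, dotProduct_smul, map_add,
        RCLike.smul_re]
      linarith [abs_le.1 (hKH z)]
  have hsub : (t • H - K).PosSemidef :=
    ((hH.smul (IsSelfAdjoint.all t)).sub hK).posSemidef_of_re_dotProduct_mulVec_nonneg fun z => by
      simp only [sub_mulVec, smul_mulVec, dotProduct_sub, dotProduct_smul, map_sub,
        RCLike.smul_re]
      linarith [abs_le.1 (hKH z)]
  set q : Matrix m m 𝕜 → (m → 𝕜) → ℝ := fun M z => RCLike.re (star z ⬝ᵥ M *ᵥ z)
  have hq (z : m → 𝕜) : q (t • H + K) z + q (t • H - K) z = 2 * t * q H z := by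
    simp only [q, add_mulVec, sub_mulVec, smul_mulVec, dotProduct_add, dotProduct_sub,
      dotProduct_smul, map_add, map_sub, RCLike.smul_re]
    ring
  have hsplit : star x ⬝ᵥ K *ᵥ y =
      (2 : 𝕜)⁻¹ * (star x ⬝ᵥ (t • H + K) *ᵥ y - star x ⬝ᵥ (t • H - K) *ᵥ y) := by
    simp only [add_mulVec, sub_mulVec, dotProduct_add, dotProduct_sub]
    ring
  calc ‖star x ⬝ᵥ K *ᵥ y‖
      ≤ (‖star x ⬝ᵥ (t • H + K) *ᵥ y‖ + ‖star x ⬝ᵥ (t • H - K) *ᵥ y‖) / 2 := by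
        rw [hsplit, norm_mul, norm_inv, RCLike.norm_two, inv_mul_eq_div]
        gcongr
        exact norm_sub_le _ _
    _ ≤ (√(q (t • H + K) x) * √(q (t • H + K) y) +
          √(q (t • H - K) x) * √(q (t • H - K) y)) / 2 := by
        gcongr
        exacts [hadd.norm_dotProduct_mulVec_le x y, hsub.norm_dotProduct_mulVec_le x y]
    _ ≤ √(q (t • H + K) x + q (t • H - K) x) * √(q (t • H + K) y + q (t • H - K) y) / 2 := by
        gcongr
        exact Real.sqrt_mul_sqrt_add_sqrt_mul_sqrt_le (hadd.re_dotProduct_nonneg x)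
          (hadd.re_dotProduct_nonneg y) (hsub.re_dotProduct_nonneg x) (hsub.re_dotProduct_nonneg y)
    _ = t * (√(q H x) * √(q H y)) := by
        have h2t : 0 ≤ 2 * t := by positivity
        rw [hq, hq, Real.sqrt_mul h2t, Real.sqrt_mul h2t, mul_mul_mul_comm,
          Real.mul_self_sqrt h2t]
        ring

end Hermitian

section RealImaginaryParts

variable {m : Type*}

-- `(A - Aᴴ) / (2 i)`
noncomputable def mim (A : Matrix m m ℂ) : Matrix m m ℂ :=
  mre (-Complex.I • A)

lemma mre_isHermitian (A : Matrix m m ℂ) : (mre A).IsHermitian :=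
  (isHermitian_add_transpose_self A).smul (by simp [IsSelfAdjoint])

lemma mim_isHermitian (A : Matrix m m ℂ) : (mim A).IsHermitian :=
  mre_isHermitian _

lemma mre_add_I_smul_mim (A : Matrix m m ℂ) : mre A + Complex.I • mim A = A := by
  rw [mim, mre, mre, conjTranspose_smul, star_neg, Complex.star_def, Complex.conj_I, smul_smul]
  match_scalars
  · linear_combination (-1 / 2 : ℂ) * Complex.I_sq
  · linear_combination (1 / 2 : ℂ) * Complex.I_sq

variable [Fintype m]

lemma star_dotProduct_conjTranspose_mulVec (A : Matrix m m ℂ) (x y : m → ℂ) :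
    star x ⬝ᵥ Aᴴ *ᵥ y = star (star y ⬝ᵥ A *ᵥ x) := by
  rw [star_dotProduct, star_mulVec, ← dotProduct_mulVec, conjTranspose_conjTranspose]

lemma re_dotProduct_mre_mulVec (A : Matrix m m ℂ) (x : m → ℂ) :
    (star x ⬝ᵥ mre A *ᵥ x).re = (star x ⬝ᵥ A *ᵥ x).re := by
  rw [mre, smul_mulVec, add_mulVec, dotProduct_smul, dotProduct_add,
    star_dotProduct_conjTranspose_mulVec, Complex.star_def, Complex.add_conj, smul_eq_mul]
  simp

lemma re_dotProduct_mim_mulVec (A : Matrix m m ℂ) (x : m → ℂ) :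
    (star x ⬝ᵥ mim A *ᵥ x).re = (star x ⬝ᵥ A *ᵥ x).im := by
  rw [mim, re_dotProduct_mre_mulVec, smul_mulVec, dotProduct_smul, smul_eq_mul]
  simp

end RealImaginaryParts

section Sector

variable {m : Type*} [Fintype m] [DecidableEq m]

lemma isUnit_det_of_posDef_mre {A : Matrix m m ℂ} (hA : (mre A).PosDef) : IsUnit A.det := by
  refine isUnit_iff_ne_zero.2 fun hdet => ?_
  obtain ⟨x, hx, hAx⟩ := exists_mulVec_eq_zero_iff.2 hdet
  have hpos := hA.re_dotProduct_pos hx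
  rw [RCLike.re_to_complex, re_dotProduct_mre_mulVec, hAx] at hpos
  simp at hpos

lemma norm_dotProduct_mulVec_le_of_abs_im_le {A : Matrix m m ℂ} (hA : (mre A).PosDef) {t : ℝ}
    (ht : 0 ≤ t) (hsec : ∀ x, |(star x ⬝ᵥ A *ᵥ x).im| ≤ t * (star x ⬝ᵥ A *ᵥ x).re)
    (u y : m → ℂ) :
    ‖star u ⬝ᵥ A *ᵥ y‖ ≤ √(1 + t ^ 2) * (√(star u ⬝ᵥ A *ᵥ u).re * √(star y ⬝ᵥ A *ᵥ y).re) := by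
  set H := mre A
  set K := mim A
  have hH : H.PosSemidef := hA.posSemidef
  have hqH (x : m → ℂ) : (star x ⬝ᵥ H *ᵥ x).re = (star x ⬝ᵥ A *ᵥ x).re :=
    re_dotProduct_mre_mulVec A x
  have hKy (x : m → ℂ) : ‖star x ⬝ᵥ K *ᵥ y‖ ≤
      t * (√(star x ⬝ᵥ H *ᵥ x).re * √(star y ⬝ᵥ H *ᵥ y).re) :=
    norm_dotProduct_mulVec_le_of_abs_re_le hH.1 (mim_isHermitian A) ht
      (fun z => by simpa only [RCLike.re_to_complex, re_dotProduct_mim_mulVec, hqH] using hsec z)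
      x y
  obtain ⟨w, hw⟩ := mulVec_surjective_iff_isUnit.2 hA.isUnit (K *ᵥ y)
  set z := y + Complex.I • w
  have hAy : A *ᵥ y = H *ᵥ z := by
    rw [mulVec_add, mulVec_smul, hw, ← smul_mulVec, ← add_mulVec, mre_add_I_smul_mim]
  have hz : (star z ⬝ᵥ H *ᵥ z).re = (star y ⬝ᵥ H *ᵥ y).re + (star w ⬝ᵥ H *ᵥ w).re := by
    have hyw : (star y ⬝ᵥ H *ᵥ w).im = 0 := by
      rw [hw]; exact (mim_isHermitian A).im_star_dotProduct_mulVec_self y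
    have hwy : star w ⬝ᵥ H *ᵥ y = star (star y ⬝ᵥ H *ᵥ w) := by
      rw [← star_dotProduct_conjTranspose_mulVec, hH.1.eq]
    simp [z, mulVec_add, mulVec_smul, dotProduct_add, hwy, hyw]
  have hw_le : (star w ⬝ᵥ H *ᵥ w).re ≤ t ^ 2 * (star y ⬝ᵥ H *ᵥ y).re := by
    refine Real.le_sq_mul_of_le_mul_sqrt_mul_sqrt (by simpa using hH.re_dotProduct_nonneg w)
      (by simpa using hH.re_dotProduct_nonneg y) ?_
    simpa only [hw] using (Complex.re_le_norm _).trans (hKy w)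
  calc ‖star u ⬝ᵥ A *ᵥ y‖ = ‖star u ⬝ᵥ H *ᵥ z‖ := by rw [hAy]
    _ ≤ √(star u ⬝ᵥ H *ᵥ u).re * √(star z ⬝ᵥ H *ᵥ z).re := hH.norm_dotProduct_mulVec_le u z
    _ ≤ √(star u ⬝ᵥ H *ᵥ u).re * √((1 + t ^ 2) * (star y ⬝ᵥ H *ᵥ y).re) := by
        gcongr
        rw [hz]
        linarith
    _ = √(1 + t ^ 2) * (√(star u ⬝ᵥ A *ᵥ u).re * √(star y ⬝ᵥ A *ᵥ y).re) := by
        rw [Real.sqrt_mul (by positivity), hqH, hqH]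
        ring

end Sector

lemma accretive_fromBlocks_smul_one_inv {m : Type*} [Fintype m] [DecidableEq m]
    {A : Matrix m m ℂ} (hA : Accretive A) (hdet : IsUnit A.det) {c : ℝ}
    (h : ∀ u y : m → ℂ,
      |c| * ‖star u ⬝ᵥ A *ᵥ y‖ ≤ √(star u ⬝ᵥ A *ᵥ u).re * √(star y ⬝ᵥ A *ᵥ y).re) :
    Accretive (fromBlocks A ((c : ℂ) • 1) ((c : ℂ) • 1) A⁻¹) := by
  refine (mre_isHermitian _).posSemidef_of_re_dotProduct_mulVec_nonneg fun x => ?_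
  rw [RCLike.re_to_complex, re_dotProduct_mre_mulVec]
  obtain ⟨y, hy⟩ := mulVec_surjective_iff_isUnit.2 ((isUnit_iff_isUnit_det A).2 hdet) (x ∘ Sum.inr)
  set u := x ∘ Sum.inl
  have hx : x = Sum.elim u (A *ᵥ y) := by rw [hy]; exact (Sum.elim_comp_inl_inr x).symm
  have hquad : (star x ⬝ᵥ fromBlocks A ((c : ℂ) • 1) ((c : ℂ) • 1) A⁻¹ *ᵥ x).re =
      (star u ⬝ᵥ A *ᵥ u).re + (star y ⬝ᵥ A *ᵥ y).re + 2 * c * (star u ⬝ᵥ A *ᵥ y).re := by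
    rw [hx, fromBlocks_mulVec, Function.star_sumElim, sumElim_dotProduct_sumElim,
      Sum.elim_comp_inl, Sum.elim_comp_inr, mulVec_mulVec (M := A⁻¹), nonsing_inv_mul A hdet,
      smul_mulVec, smul_mulVec, one_mulVec, one_mulVec, one_mulVec, dotProduct_add, dotProduct_add,
      dotProduct_smul, dotProduct_smul, star_dotProduct (A *ᵥ y) u, star_dotProduct (A *ᵥ y) y]
    simp only [smul_eq_mul, Complex.add_re, Complex.re_ofReal_mul, Complex.star_def,
      Complex.conj_re]
    ring
  have hu := hA.re_dotProduct_nonneg u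
  have hy0 := hA.re_dotProduct_nonneg y
  rw [RCLike.re_to_complex, re_dotProduct_mre_mulVec] at hu hy0
  have hcross : -(|c| * ‖star u ⬝ᵥ A *ᵥ y‖) ≤ c * (star u ⬝ᵥ A *ᵥ y).re := by
    calc -(|c| * ‖star u ⬝ᵥ A *ᵥ y‖) ≤ -|c * (star u ⬝ᵥ A *ᵥ y).re| := by
          rw [abs_mul]
          gcongr
          exact Complex.abs_re_le_norm _
      _ ≤ c * (star u ⬝ᵥ A *ᵥ y).re := neg_abs_le _
  rw [hquad]
  nlinarith [h u y, sq_nonneg (√(star u ⬝ᵥ A *ᵥ u).re - √(star y ⬝ᵥ A *ᵥ y).re),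
    Real.sq_sqrt hu, Real.sq_sqrt hy0]

lemma InSector.abs_im_le {k : ℕ} {α : ℝ} {A : Matrix (Fin k) (Fin k) ℂ} (hA : InSector α A)
    (x : Fin k → ℂ) : |(star x ⬝ᵥ A *ᵥ x).im| ≤ Real.tan α * (star x ⬝ᵥ A *ᵥ x).re := by
  rcases eq_or_ne x 0 with rfl | hx
  · simp
  set X : EuclideanSpace ℂ (Fin k) := WithLp.toLp 2 x
  have hX : 0 < ‖X‖ := norm_pos_iff.2 (by simpa [X] using hx)
  have hquad : star ((‖X‖⁻¹ : ℂ) • x) ⬝ᵥ A *ᵥ ((‖X‖⁻¹ : ℂ) • x) =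
      ((‖X‖⁻¹ ^ 2 : ℝ) : ℂ) * (star x ⬝ᵥ A *ᵥ x) := by
    simp [mulVec_smul, dotProduct_smul, smul_dotProduct, sq, mul_assoc]
  have h := (hA ((‖X‖⁻¹ : ℂ) • X) (by simp [norm_smul, hX.ne'])).2
  change |(star ((‖X‖⁻¹ : ℂ) • x) ⬝ᵥ A *ᵥ ((‖X‖⁻¹ : ℂ) • x)).im| ≤
    Real.tan α * (star ((‖X‖⁻¹ : ℂ) • x) ⬝ᵥ A *ᵥ ((‖X‖⁻¹ : ℂ) • x)).re at h
  rw [hquad, Complex.re_ofReal_mul, Complex.im_ofReal_mul, abs_mul, abs_of_pos (by positivity),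
    mul_left_comm] at h
  exact le_of_mul_le_mul_left h (by positivity)

/-- If `A` is strictly accretive with numerical range in the sector `S_α`,
then `[[A, cos α · I], [cos α · I, A⁻¹]]` is accretive. -/
theorem stmt2 {n : ℕ} (α : ℝ) (hα₀ : 0 ≤ α) (hα₁ : α < Real.pi / 2)
    (A : Matrix (Fin n) (Fin n) ℂ) (hA : (mre A).PosDef) (hAsec : InSector α A) :
    Accretive (Matrix.fromBlocks A ((Real.cos α : ℂ) • (1 : Matrix (Fin n) (Fin n) ℂ))
      ((Real.cos α : ℂ) • (1 : Matrix (Fin n) (Fin n) ℂ)) A⁻¹) := by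
  have hcos : 0 < Real.cos α := Real.cos_pos_of_mem_Ioo ⟨by linarith [Real.pi_pos], hα₁⟩
  have htan : 0 ≤ Real.tan α := Real.tan_nonneg_of_nonneg_of_le_pi_div_two hα₀ hα₁.le
  refine accretive_fromBlocks_smul_one_inv hA.posSemidef (isUnit_det_of_posDef_mre hA)
    fun u y => ?_
  calc |Real.cos α| * ‖star u ⬝ᵥ A *ᵥ y‖
      ≤ Real.cos α * (√(1 + Real.tan α ^ 2) *
          (√(star u ⬝ᵥ A *ᵥ u).re * √(star y ⬝ᵥ A *ᵥ y).re)) := by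
        rw [abs_of_pos hcos]
        gcongr
        exact norm_dotProduct_mulVec_le_of_abs_im_le hA htan hAsec.abs_im_le u y
    _ = √(star u ⬝ᵥ A *ᵥ u).re * √(star y ⬝ᵥ A *ᵥ y).re := by
        rw [← mul_assoc, ← Real.inv_sqrt_one_add_tan_sq hcos, inv_mul_cancel₀ (by positivity),
          one_mul]
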